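/- arXiv:2403.20074 — 6 statements merged into one kernel-verified Lean document; each statement's English description precedes it below -/
import Mathlib

section
/- Fix an integer m ≥ 2. In the ring ℤ⟦t⟧ of formal power series over ℤ, the identity (Σ_{n ≥ 0} φ(n) t^n) · (1 + Σ_{k=1}^{m-1} (-1)^k (m-k) t^k) = 1 holds; that is, the generating function f^!(t) = Σ_{n ≥ 0} φ(n) t^n is the multiplicative inverse of f(-t), where f(t) = 1 + Σ_{k=1}^{m-1} (m-k) t^k. -/
/-- `phiNat m n` is the number of sequences `(i₁, …, iₙ)` with entries in `{1, …, m-1}`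
(encoded as functions `Fin n → Fin m` with nonzero values) such that no entry is
immediately followed by its successor. -/
noncomputable def phiNat (m n : ℕ) : ℕ :=
  Nat.card {f : Fin n → Fin m //
    (∀ k, 1 ≤ (f k : ℕ)) ∧
    ∀ (k : ℕ) (hk : k + 1 < n),
      (f ⟨k + 1, hk⟩ : ℕ) ≠ (f ⟨k, Nat.lt_of_succ_lt hk⟩ : ℕ) + 1}

/-- `phi m : ℤ → ℤ`, the rank function of the quadratic dual algebra `N_m(R)^!`,
vanishing on negative integers. -/
noncomputable def phi (m : ℕ) (n : ℤ) : ℤ :=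
  if n < 0 then 0 else phiNat m n.toNat

/-! An admissible word of length `n + 2` is a first letter `a` followed by an admissible word of
length `n + 1` that does not start with `a + 1`. So if `Ψ_a` is the (shifted) generating series of
admissible words starting with `a` and `F = f^!`, then `Ψ_a + X Ψ_{a+1} = F` and `Ψ_m = 0`, whence
`Ψ_a = (∑_{j < m - a} (-X)^j) F`. Summing over the first letter, `F = 1 + X ∑_a Ψ_a`, and collecting
the geometric sums turns this into `F · f(-X) = 1`. -/

open Finset PowerSeries

section Words

open Classical

variable {m n : ℕ}

def Admissible (f : Fin n → Fin m) : Prop :=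
  (∀ k, 1 ≤ (f k : ℕ)) ∧
    ∀ (k : ℕ) (hk : k + 1 < n), (f ⟨k + 1, hk⟩ : ℕ) ≠ (f ⟨k, Nat.lt_of_succ_lt hk⟩ : ℕ) + 1

lemma admissible_cons_iff {a : Fin m} {g : Fin (n + 1) → Fin m} :
    Admissible (Fin.cons a g : Fin (n + 2) → Fin m) ↔
      1 ≤ (a : ℕ) ∧ Admissible g ∧ (g 0 : ℕ) ≠ a + 1 := by
  simp only [Admissible, Fin.forall_fin_succ, Fin.cons_zero, Fin.cons_succ]
  constructor
  · rintro ⟨⟨ha, hg⟩, h⟩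
    exact ⟨ha, ⟨hg, fun k hk => h (k + 1) (by omega)⟩, by simpa using h 0 (by omega)⟩
  · rintro ⟨ha, ⟨hg, h⟩, h0⟩
    refine ⟨⟨ha, hg⟩, fun k hk => ?_⟩
    cases k with
    | zero => simpa using h0
    | succ k => exact h k (by omega)

lemma phiNat_eq_card (m n : ℕ) : phiNat m n = #{f : Fin n → Fin m | Admissible f} := by
  rw [← Fintype.card_subtype, ← Nat.card_eq_fintype_card]
  rfl

lemma phiNat_zero (m : ℕ) : phiNat m 0 = 1 := by
  simp [phiNat_eq_card, Admissible]

noncomputable def startCount (m n a : ℕ) : ℕ :=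
  #{f : Fin (n + 1) → Fin m | Admissible f ∧ (f 0 : ℕ) = a}

lemma startCount_of_le {a : ℕ} (h : m ≤ a) : startCount m n a = 0 := by
  rw [startCount, card_eq_zero, filter_eq_empty_iff]
  rintro f - ⟨-, hf⟩
  have := (f 0).isLt
  omega

lemma startCount_zero {a : ℕ} (h1 : 1 ≤ a) (h2 : a < m) : startCount m 0 a = 1 := by
  rw [startCount, card_eq_one]
  refine ⟨fun _ => ⟨a, h2⟩, ?_⟩
  ext f
  simp [Admissible, funext_iff, Fin.forall_fin_one, Fin.ext_iff]
  omega

lemma phiNat_succ (m n : ℕ) : phiNat m (n + 1) = ∑ a ∈ Ico 1 m, startCount m n a := by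
  rw [phiNat_eq_card, card_eq_sum_card_fiberwise (f := fun f => (f 0 : ℕ)) (t := Ico 1 m)]
  · simp only [startCount, filter_filter]
  · intro f hf
    exact mem_Ico.2 ⟨((mem_filter_univ _).1 hf).1 0, (f 0).isLt⟩

lemma startCount_succ_add {a : ℕ} (h1 : 1 ≤ a) (h2 : a < m) :
    startCount m (n + 1) a + startCount m n (a + 1) = phiNat m (n + 1) := by
  have htail : startCount m (n + 1) a =
      #{g : Fin (n + 1) → Fin m | Admissible g ∧ (g 0 : ℕ) ≠ a + 1} := by
    refine card_nbij' (fun f => Fin.tail f) (fun g => Fin.cons (⟨a, h2⟩ : Fin m) g) ?_ ?_ ?_ ?_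
    · intro f hf
      obtain ⟨hadm, hf0⟩ := (mem_filter_univ _).1 hf
      rw [← Fin.cons_self_tail f, admissible_cons_iff] at hadm
      exact (mem_filter_univ _).2 ⟨hadm.2.1, hf0 ▸ hadm.2.2⟩
    · intro g hg
      exact (mem_filter_univ _).2 ⟨admissible_cons_iff.2 ⟨h1, (mem_filter_univ g).1 hg⟩, rfl⟩
    · intro f hf
      obtain ⟨-, hf0⟩ := (mem_filter_univ _).1 hf
      rw [show (⟨a, h2⟩ : Fin m) = f 0 from Fin.ext hf0.symm]
      exact Fin.cons_self_tail f
    · intro g _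
      exact Fin.tail_cons _ _
  rw [htail, phiNat_eq_card,
    ← card_filter_add_card_filter_not (s := {g | Admissible g}) (fun g => (g 0 : ℕ) ≠ a + 1),
    filter_filter, filter_filter, startCount]
  simp only [not_not]

end Words

section Series

variable {m : ℕ}

noncomputable def phiSeries (m : ℕ) : PowerSeries ℤ := mk fun n => (phiNat m n : ℤ)

noncomputable def startSeries (m a : ℕ) : PowerSeries ℤ := mk fun n => (startCount m n a : ℤ)

lemma startSeries_add_X_mul {a : ℕ} (h1 : 1 ≤ a) (h2 : a < m) :
    startSeries m a + X * startSeries m (a + 1) = phiSeries m := by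
  ext (_ | n)
  · simp [startSeries, phiSeries, startCount_zero h1 h2, phiNat_zero]
  · simp [startSeries, phiSeries, coeff_succ_X_mul, ← startCount_succ_add h1 h2 (n := n)]

lemma startSeries_self (m : ℕ) : startSeries m m = 0 := by
  ext n
  simp [startSeries, startCount_of_le le_rfl]

lemma startSeries_eq {a : ℕ} (h1 : 1 ≤ a) (h2 : a ≤ m) :
    startSeries m a = (∑ j ∈ range (m - a), (-X) ^ j) * phiSeries m := by
  induction h2 using Nat.decreasingInduction with
  | of_succ k hk ih =>
    have h := startSeries_add_X_mul h1 hk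
    rw [ih (by omega)] at h
    rw [show m - k = m - (k + 1) + 1 by omega, geom_sum_succ]
    linear_combination h
  | self => simp [startSeries_self]

lemma phiSeries_eq (m : ℕ) : phiSeries m = 1 + X * ∑ a ∈ Ico 1 m, startSeries m a := by
  ext (_ | n)
  · simp [phiSeries, phiNat_zero]
  · simp [phiSeries, startSeries, coeff_succ_X_mul, phiNat_succ, map_sum]

end Series

lemma mul_geom_sum_eq_sum_Icc {R : Type*} [Semiring R] (x : R) (n : ℕ) :
    x * ∑ j ∈ range n, x ^ j = ∑ k ∈ Icc 1 n, x ^ k := by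
  induction n with
  | zero => simp
  | succ n ih => rw [sum_Icc_succ_top (by omega), ← ih, sum_range_succ, mul_add, pow_succ']

lemma sum_Ico_mul_geom_sum {R : Type*} [Semiring R] (x : R) (m : ℕ) :
    ∑ a ∈ Ico 1 m, x * ∑ j ∈ range (m - a), x ^ j = ∑ k ∈ Icc 1 (m - 1), (m - k) • x ^ k := by
  simp_rw [mul_geom_sum_eq_sum_Icc]
  rw [sum_comm' (t' := Icc 1 (m - 1)) (s' := fun k => Icc 1 (m - k)) (by intros; simp; omega)]
  simp [sum_const, Nat.card_Icc]

theorem stmt_3_general (m : ℕ) :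
    (PowerSeries.mk fun n : ℕ => phi m (n : ℤ)) *
        (1 + ∑ k ∈ Finset.Icc 1 (m - 1),
          (PowerSeries.C : ℤ →+* PowerSeries ℤ) ((-1) ^ k * ((m : ℤ) - (k : ℤ))) * PowerSeries.X ^ k) = 1 := by
  have hphi : (PowerSeries.mk fun n : ℕ => phi m (n : ℤ)) = phiSeries m := by
    ext n
    simp [phiSeries, phi]
  have hpoly : ∑ k ∈ Icc 1 (m - 1), C ((-1) ^ k * ((m : ℤ) - (k : ℤ))) * X ^ k =
      -(X * ∑ a ∈ Ico 1 m, ∑ j ∈ range (m - a), (-X : PowerSeries ℤ) ^ j) := by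
    rw [← neg_mul, mul_sum, sum_Ico_mul_geom_sum]
    refine sum_congr rfl fun k hk => ?_
    rw [mem_Icc] at hk
    rw [nsmul_eq_mul, neg_pow X, Nat.cast_sub (by omega : k ≤ m), map_mul, map_pow, map_neg,
      map_one, map_sub, map_natCast, map_natCast]
    ring
  have hrec := phiSeries_eq m
  rw [sum_congr rfl fun a ha => startSeries_eq (mem_Ico.1 ha).1 (mem_Ico.1 ha).2.le,
    ← sum_mul] at hrec
  rw [hphi, hpoly]
  linear_combination hrec

/-- **Proposition (Itagaki–Nakamoto–Torii).**
In `ℤ⟦t⟧` one has `f^!(t) · f(-t) = 1`, where `f^!(t) = ∑_{n ≥ 0} φ(n) tⁿ` and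
`f(-t) = 1 + ∑_{k=1}^{m-1} (-1)^k (m-k) t^k`. -/
theorem stmt_3 (m : ℕ) (hm : 2 ≤ m) :
    (PowerSeries.mk fun n : ℕ => phi m (n : ℤ)) *
        (1 + ∑ k ∈ Finset.Icc 1 (m - 1),
          (PowerSeries.C : ℤ →+* PowerSeries ℤ) ((-1) ^ k * ((m : ℤ) - (k : ℤ))) * PowerSeries.X ^ k) = 1 :=
  stmt_3_general m
end

section
/- Fix an integer m ≥ 2. For every integer q > 0, the identity φ(q) = Σ_{r=1}^{m-1} (-1)^{r-1} (m-r) φ(q-r) holds in ℤ (where φ(k) = 0 for k < 0). -/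
namespace PhiAux

/-- The defining property of the sequences counted by `phiNat`. -/
def Good (m n : ℕ) (f : Fin n → Fin m) : Prop :=
  (∀ k, 1 ≤ (f k : ℕ)) ∧
  ∀ (k : ℕ) (hk : k + 1 < n),
    (f ⟨k + 1, hk⟩ : ℕ) ≠ (f ⟨k, Nat.lt_of_succ_lt hk⟩ : ℕ) + 1

instance (m n : ℕ) : DecidablePred (Good m n) := fun f =>
  decidable_of_iff
    ((∀ k, 1 ≤ (f k : ℕ)) ∧
      ∀ (k : Fin n) (hk : (k : ℕ) + 1 < n),
        (f ⟨(k : ℕ) + 1, hk⟩ : ℕ) ≠ (f ⟨(k : ℕ), Nat.lt_of_succ_lt hk⟩ : ℕ) + 1)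
    (by
      constructor
      · rintro ⟨h1, h2⟩
        exact ⟨h1, fun k hk => h2 ⟨k, Nat.lt_of_succ_lt hk⟩ hk⟩
      · rintro ⟨h1, h2⟩
        exact ⟨h1, fun k hk => h2 k hk⟩)

lemma phiNat_eq (m n : ℕ) : phiNat m n = Nat.card {f : Fin n → Fin m // Good m n f} := rfl

lemma phiNat_eq_card (m n : ℕ) :
    phiNat m n = (Finset.univ.filter (Good m n)).card := by
  rw [phiNat_eq, Nat.card_eq_fintype_card, Fintype.card_subtype]

lemma phiNat_zero (m : ℕ) : phiNat m 0 = 1 := by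
  rw [phiNat_eq]
  have : Unique {f : Fin 0 → Fin m // Good m 0 f} :=
    ⟨⟨⟨finZeroElim, fun k => k.elim0, fun k hk => absurd hk (by omega)⟩⟩,
      fun f => Subtype.ext (funext fun k => k.elim0)⟩
  exact Nat.card_unique

lemma phi_natCast (m k : ℕ) : phi m (k : ℤ) = phiNat m k := by
  simp [phi]

lemma phi_neg (m : ℕ) {n : ℤ} (h : n < 0) : phi m n = 0 := by
  simp [phi, h]

/-- `lastCount m n j` counts good sequences of length `n+1` whose last entry is `j`. -/
noncomputable def lastCount (m n j : ℕ) : ℕ :=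
  Nat.card {f : Fin (n + 1) → Fin m //
    Good m (n + 1) f ∧ (f (Fin.last n) : ℕ) = j}

lemma lastCount_eq_card (m n j : ℕ) :
    lastCount m n j =
      (Finset.univ.filter
        (fun f : Fin (n+1) → Fin m => Good m (n+1) f ∧ (f (Fin.last n) : ℕ) = j)).card := by
  rw [lastCount, Nat.card_eq_fintype_card, Fintype.card_subtype]

lemma lastCount_zero_right (m n : ℕ) : lastCount m n 0 = 0 := by
  have : IsEmpty {f : Fin (n + 1) → Fin m //
      Good m (n + 1) f ∧ (f (Fin.last n) : ℕ) = 0} := by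
    constructor
    rintro ⟨f, hf, hlast⟩
    have := hf.1 (Fin.last n)
    omega
  rw [lastCount]
  exact Nat.card_of_isEmpty

/-- Partition of good sequences of length `n+1` according to their last entry. -/
lemma phiNat_succ_eq_sum (m n : ℕ) (hm : 2 ≤ m) :
    phiNat m (n + 1) = ∑ j ∈ Finset.Icc 1 (m - 1), lastCount m n j := by
  rw [phiNat_eq_card]
  have H : ∀ f ∈ Finset.univ.filter (Good m (n+1)),
      (f (Fin.last n) : ℕ) ∈ Finset.Icc 1 (m - 1) := by
    intro f hf
    rw [Finset.mem_filter] at hf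
    have h1 := hf.2.1 (Fin.last n)
    have h2 := (f (Fin.last n)).isLt
    rw [Finset.mem_Icc]
    omega
  rw [Finset.card_eq_sum_card_fiberwise H]
  refine Finset.sum_congr rfl fun j _ => ?_
  rw [lastCount_eq_card, Finset.filter_filter]

/-- The key snoc characterization of goodness. -/
lemma good_snoc (m n : ℕ) (w : Fin (n + 1) → Fin m) (x : Fin m) :
    Good m (n + 2) (Fin.snoc w x) ↔
      Good m (n + 1) w ∧ 1 ≤ (x : ℕ) ∧ (x : ℕ) ≠ (w (Fin.last n) : ℕ) + 1 := by
  have hcast : ∀ (k : ℕ) (hk : k < n + 1),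
      (Fin.snoc w x : Fin (n+2) → Fin m) ⟨k, Nat.lt_succ_of_lt hk⟩ = w ⟨k, hk⟩ := by
    intro k hk
    have : (⟨k, Nat.lt_succ_of_lt hk⟩ : Fin (n+2)) = Fin.castSucc ⟨k, hk⟩ := rfl
    rw [this, Fin.snoc_castSucc]
  have hlast : (Fin.snoc w x : Fin (n+2) → Fin m) ⟨n + 1, by omega⟩ = x := by
    have : (⟨n + 1, by omega⟩ : Fin (n+2)) = Fin.last (n+1) := rfl
    rw [this, Fin.snoc_last]
  have hlastn : (⟨n, by omega⟩ : Fin (n+1)) = Fin.last n := rfl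
  constructor
  · rintro ⟨h1, h2⟩
    refine ⟨⟨fun k => ?_, fun k hk => ?_⟩, ?_, ?_⟩
    · have := h1 ⟨(k : ℕ), Nat.lt_succ_of_lt k.isLt⟩
      rwa [hcast (k : ℕ) k.isLt, Fin.eta] at this
    · have hk2 : k + 1 < n + 2 := Nat.lt_succ_of_lt hk
      have := h2 k hk2
      rwa [hcast (k+1) hk, hcast k (Nat.lt_of_succ_lt hk)] at this
    · have := h1 ⟨n + 1, by omega⟩
      rwa [hlast] at this
    · have hk2 : n + 1 < n + 2 := by omega
      have := h2 n hk2
      rwa [hlast, hcast n (by omega), hlastn] at this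
  · rintro ⟨⟨h1, h2⟩, hx1, hx2⟩
    constructor
    · intro k
      rcases Nat.lt_or_ge (k : ℕ) (n + 1) with h | h
      · have hek : (⟨(k : ℕ), Nat.lt_succ_of_lt h⟩ : Fin (n+2)) = k := Fin.ext rfl
        rw [← hek, hcast (k : ℕ) h]
        exact h1 _
      · have hk : (k : ℕ) = n + 1 := by omega
        have hek : (⟨n + 1, by omega⟩ : Fin (n+2)) = k := Fin.ext hk.symm
        rw [← hek, hlast]
        exact hx1
    · intro k hk
      rcases Nat.lt_or_ge (k + 1) (n + 1) with h | h
      · rw [hcast (k+1) h, hcast k (Nat.lt_of_succ_lt h)]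
        exact h2 k h
      · have hk' : k = n := by omega
        have e1 : (⟨k + 1, hk⟩ : Fin (n+2)) = ⟨n + 1, by omega⟩ := by
          apply Fin.ext
          show k + 1 = n + 1
          omega
        have e2 : (⟨k, Nat.lt_of_succ_lt hk⟩ : Fin (n+2)) = ⟨n, by omega⟩ := by
          apply Fin.ext
          show k = n
          omega
        rw [e1, e2, hlast, hcast n (by omega), hlastn]
        exact hx2

/-- The recursion: good sequences of length `n+2` ending in `j+1` biject with
good sequences of length `n+1` whose last entry is not `j`. -/
lemma lastCount_succ (m n j : ℕ) (hj : j + 1 ≤ m - 1) (hm : 2 ≤ m) :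
    lastCount m (n + 1) (j + 1) + lastCount m n j = phiNat m (n + 1) := by
  have hjm : j + 1 < m := by omega
  have key : lastCount m (n + 1) (j + 1) =
      Nat.card {w : Fin (n+1) → Fin m //
        Good m (n+1) w ∧ ¬ ((w (Fin.last n) : ℕ) = j)} := by
    rw [lastCount]
    refine Nat.card_congr ⟨fun f => ⟨Fin.init f.1, ?_⟩, fun w => ⟨Fin.snoc w.1 ⟨j+1, hjm⟩, ?_⟩,
      fun f => ?_, fun w => ?_⟩
    · obtain ⟨hg, hl⟩ := f.2
      have hre : Good m (n+2) (Fin.snoc (Fin.init f.1) (f.1 (Fin.last (n+1)))) := by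
        rw [Fin.snoc_init_self]; exact hg
    
      rw [good_snoc] at hre
      refine ⟨hre.1, fun hc => hre.2.2 ?_⟩
      rw [hc, hl]
    · obtain ⟨hw, hne⟩ := w.2
      constructor
      · refine (good_snoc m n w.1 ⟨j+1, hjm⟩).2 ⟨hw, ?_, ?_⟩
        · show 1 ≤ j + 1; omega
        · show j + 1 ≠ (w.1 (Fin.last n) : ℕ) + 1
          omega
      · show ((Fin.snoc w.1 ⟨j+1, hjm⟩ : Fin (n+2) → Fin m) (Fin.last (n+1)) : ℕ) = j + 1
        rw [Fin.snoc_last]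
    · apply Subtype.ext
      have hl : (⟨j + 1, hjm⟩ : Fin m) = f.1 (Fin.last (n+1)) := Fin.ext (by simp [f.2.2])
      show Fin.snoc (Fin.init f.1) (⟨j+1, hjm⟩ : Fin m) = f.1
      rw [hl, Fin.snoc_init_self]
    · apply Subtype.ext
      have hins := Fin.init_snoc (α := fun _ : Fin (n+1+1) => Fin m) (⟨j+1, hjm⟩ : Fin m) w.1
      exact hins
  have key2 : Nat.card {w : Fin (n+1) → Fin m //
      Good m (n+1) w ∧ ¬ ((w (Fin.last n) : ℕ) = j)} =
      (Finset.univ.filter (fun w : Fin (n+1) → Fin m =>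
        Good m (n+1) w ∧ ¬ ((w (Fin.last n) : ℕ) = j))).card := by
    rw [Nat.card_eq_fintype_card, Fintype.card_subtype]
  rw [key, key2, lastCount_eq_card, phiNat_eq_card]
  have h := Finset.card_filter_add_card_filter_not
    (s := Finset.univ.filter (Good m (n+1)))
    (p := fun f => (f (Fin.last n) : ℕ) = j)
  rw [Finset.filter_filter, Finset.filter_filter] at h
  rw [add_comm]
  exact h

/-- Base case: there is exactly one good sequence of length 1 ending in `j`, `1 ≤ j ≤ m-1`. -/
lemma lastCount_base (m j : ℕ) (hj1 : 1 ≤ j) (hj2 : j ≤ m - 1) (hm : 2 ≤ m) :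
    lastCount m 0 j = 1 := by
  have hjm : j < m := by omega
  rw [lastCount, Nat.card_eq_one_iff_unique]
  constructor
  · constructor
    rintro ⟨f, hf, hfl⟩ ⟨g, hg, hgl⟩
    apply Subtype.ext
    show f = g
    funext k
    have hk : k = Fin.last 0 := Fin.ext (by omega)
    subst hk
    exact Fin.ext (by omega)
  · exact ⟨⟨fun _ => ⟨j, hjm⟩, ⟨fun k => hj1, fun k hk => absurd hk (by omega)⟩, rfl⟩⟩

lemma Icc_one_succ (j : ℕ) : Finset.Icc 1 (j + 1) = insert 1 (Finset.Icc 2 (j + 1)) := by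
  ext a
  simp only [Finset.mem_Icc, Finset.mem_insert]
  omega

/-- The closed form for `lastCount` as an alternating sum of `phi` values. -/
lemma lastCount_closed (m : ℕ) (hm : 2 ≤ m) :
    ∀ n j, j ≤ m - 1 →
      (lastCount m n j : ℤ) =
        ∑ r ∈ Finset.Icc 1 j, (-1 : ℤ) ^ (r - 1) * phi m ((n : ℤ) + 1 - (r : ℤ)) := by
  intro n
  induction n with
  | zero =>
    intro j hj
    rcases Nat.eq_zero_or_pos j with hj0 | hj1
    · subst hj0; simp [lastCount_zero_right]
    · rw [lastCount_base m j hj1 hj hm]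
      rw [Finset.sum_eq_single 1]
      · have h0 : phi m 0 = 1 := by simp [phi, phiNat_zero]
        norm_num [h0]
      · intro r hr hr1
        rw [Finset.mem_Icc] at hr
        have hneg : ((0 : ℕ) : ℤ) + 1 - (r : ℤ) < 0 := by
          have : 2 ≤ r := by omega
          push_cast
          omega
        rw [phi_neg m hneg, mul_zero]
      · intro h
        exact absurd (Finset.mem_Icc.mpr ⟨le_refl 1, hj1⟩) h
  | succ n ih =>
    intro j hj
    rcases Nat.eq_zero_or_pos j with hj0 | hj1
    · subst hj0; simp [lastCount_zero_right]
    · obtain ⟨j', rfl⟩ := Nat.exists_eq_add_of_le hj1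
      rw [add_comm 1 j']
      have hrec := lastCount_succ m n j' (by omega) hm
      have hsub : (lastCount m (n+1) (j'+1) : ℤ) =
          (phiNat m (n+1) : ℤ) - lastCount m n j' := by
        push_cast [← hrec]
        ring
      rw [hsub, ih j' (by omega)]
      -- now massage the RHS
      rw [Icc_one_succ j', Finset.sum_insert (by simp)]
      have hmap : ∑ r ∈ Finset.Icc 2 (j' + 1),
          (-1 : ℤ) ^ (r - 1) * phi m (((n+1 : ℕ) : ℤ) + 1 - (r : ℤ)) =
          ∑ r ∈ Finset.Icc 1 j',
            (-1 : ℤ) ^ ((r + 1) - 1) * phi m (((n+1 : ℕ) : ℤ) + 1 - ((r + 1 : ℕ) : ℤ)) := by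
        have : Finset.Icc 2 (j' + 1) = (Finset.Icc 1 j').map (addRightEmbedding 1) := by
          rw [Finset.map_add_right_Icc]
        rw [this, Finset.sum_map]
        refine Finset.sum_congr rfl fun r hr => ?_
        simp [addRightEmbedding_apply]
      rw [hmap]
      have hterm : ∀ r ∈ Finset.Icc 1 j',
          (-1 : ℤ) ^ ((r + 1) - 1) * phi m (((n+1 : ℕ) : ℤ) + 1 - ((r + 1 : ℕ) : ℤ)) =
          -((-1 : ℤ) ^ (r - 1) * phi m ((n : ℤ) + 1 - (r : ℤ))) := by
        intro r hr
        rw [Finset.mem_Icc] at hr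
        have h1 : (r + 1) - 1 = (r - 1) + 1 := by omega
        have h2 : ((n+1 : ℕ) : ℤ) + 1 - ((r + 1 : ℕ) : ℤ) = (n : ℤ) + 1 - (r : ℤ) := by
          push_cast; ring
        rw [h1, h2, pow_succ]
        ring
      rw [Finset.sum_congr rfl hterm, Finset.sum_neg_distrib]
      have h0 : phi m (((n+1 : ℕ) : ℤ) + 1 - ((1 : ℕ) : ℤ)) = (phiNat m (n+1) : ℤ) := by
        rw [show ((n+1 : ℕ) : ℤ) + 1 - ((1 : ℕ) : ℤ) = ((n+1 : ℕ) : ℤ) by push_cast; ring,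
          phi_natCast]
      rw [h0]
      norm_num
      ring

/-- Exchanging the order of summation in a triangular double sum. -/
lemma swap_sum (M : ℕ) (g : ℕ → ℤ) :
    ∑ j ∈ Finset.Icc 1 M, ∑ r ∈ Finset.Icc 1 j, g r =
      ∑ r ∈ Finset.Icc 1 M, ((M + 1 - r : ℕ) : ℤ) * g r := by
  induction M with
  | zero => simp
  | succ M ih =>
    rw [Finset.sum_Icc_succ_top (by omega : 1 ≤ M + 1), ih,
      Finset.sum_Icc_succ_top (by omega : 1 ≤ M + 1) g,
      Finset.sum_Icc_succ_top (by omega : 1 ≤ M + 1)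
        (fun r => ((M + 1 + 1 - r : ℕ) : ℤ) * g r)]
    have : ∀ r ∈ Finset.Icc 1 M,
        ((M + 1 + 1 - r : ℕ) : ℤ) * g r = ((M + 1 - r : ℕ) : ℤ) * g r + g r := by
      intro r hr
      rw [Finset.mem_Icc] at hr
      have h1 : ((M + 1 + 1 - r : ℕ) : ℤ) = ((M + 1 - r : ℕ) : ℤ) + 1 := by
        have := hr.2
        omega
      rw [h1]; ring
    rw [Finset.sum_congr rfl this, Finset.sum_add_distrib]
    have h2 : ((M + 1 + 1 - (M + 1) : ℕ) : ℤ) = 1 := by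
      norm_num
    rw [h2]
    ring

end PhiAux

/-- **Lemma (Itagaki–Nakamoto–Torii).**
For `q > 0`, `φ(q) = ∑_{r=1}^{m-1} (-1)^{r-1} (m-r) φ(q-r)`. -/
theorem stmt_4 (m : ℕ) (hm : 2 ≤ m) (q : ℤ) (hq : 0 < q) :
    phi m q = ∑ r ∈ Finset.Icc 1 (m - 1),
      (-1 : ℤ) ^ (r - 1) * ((m : ℤ) - (r : ℤ)) * phi m (q - (r : ℤ)) := by
  classical
  obtain ⟨n, hn⟩ : ∃ n : ℕ, q = ((n + 1 : ℕ) : ℤ) := by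
    refine ⟨q.toNat - 1, ?_⟩
    have h1 : q.toNat = q := Int.toNat_of_nonneg (le_of_lt hq)
    have h2 : 1 ≤ q.toNat := by omega
    omega
  subst hn
  rw [PhiAux.phi_natCast, PhiAux.phiNat_succ_eq_sum m n hm]
  push_cast
  have hstep : ∀ j ∈ Finset.Icc 1 (m - 1),
      ((PhiAux.lastCount m n j : ℤ)) =
        ∑ r ∈ Finset.Icc 1 j, (-1 : ℤ) ^ (r - 1) * phi m ((n : ℤ) + 1 - (r : ℤ)) := by
    intro j hj
    rw [Finset.mem_Icc] at hj
    exact PhiAux.lastCount_closed m hm n j hj.2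
  rw [Finset.sum_congr rfl hstep,
    PhiAux.swap_sum (m - 1) (fun r => (-1 : ℤ) ^ (r - 1) * phi m ((n : ℤ) + 1 - (r : ℤ)))]
  refine Finset.sum_congr rfl fun r hr => ?_
  rw [Finset.mem_Icc] at hr
  have hc : (((m - 1) + 1 - r : ℕ) : ℤ) = (m : ℤ) - (r : ℤ) := by
    have := hr.2
    omega
  have harg : ((n : ℤ) + 1 - (r : ℤ)) = ((n + 1 : ℕ) : ℤ) - (r : ℤ) := by push_cast; ring
  rw [hc, harg]
  ring
end

section
/- Fix an integer m ≥ 2. For every integer n ≥ 0, φ(n) = (-1)^n Σ_{r ≥ 0} (-1)^r Σ_{(a_1, …, a_r)} (m - a_1)(m - a_2)⋯(m - a_r), where the inner sum ranges over all r-tuples of integers (a_1, …, a_r) satisfying 1 ≤ a_i ≤ m-1 for each i and a_1 + ⋯ + a_r = n (for n = 0 the only contribution comes from the empty tuple with r = 0, whose product is 1; the outer sum is finite since nonzero terms require r ≤ n). -/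
/-!
Both sides satisfy `u 0 = 1` and `u (n + 1) = ∑_{k ≤ n} (-1)^k (m - (k + 1)) u (n - k)`,
where the truncated difference `m - a` is the number of runs `i, i + 1, …, i + a - 1` inside
`{1, …, m - 1}`.

For `φ`, let `B n x` count the good words of length `n + 1` with first letter `> x`. A first
letter `y > x` followed by a good word `t` of length `n + 1` is a good word unless `t` starts with
`y + 1`, and the words `t` so excluded are exactly those counted by `B n (x + 1)`. Hence
`B (n + 1) x + B n (x + 1) = (m - (x + 1)) φ (n + 1)`; unrolling in `x` and using
`φ (n + 1) = B n 0` gives the recurrence.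

For the right-hand side, with `P = ∑_{a=1}^{m-1} (m - a) X^a` the inner sum over `r`-tuples is
the coefficient of `X^n` in `P^r`, so `S n = ∑_{r ≤ n} (-1)^r [X^n] P^r` is the coefficient of
`X^n` in `1 / (1 + P)`. Splitting one factor `P` off `P^(r+1)` gives
`S (n + 1) = -∑_{k ≤ n} [X^(k+1)] P · S (n - k)`, the recurrence for `(-1)^n S n`.
-/

open Finset Polynomial

namespace Polynomial

section CommSemiring

variable {R : Type*} [CommSemiring R]

theorem coeff_pow_sum_C_mul_X_pow (s : Finset ℕ) (w : ℕ → R) (r n : ℕ) :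
    ((∑ a ∈ s, C (w a) * X ^ a) ^ r).coeff n =
      ∑ a ∈ (Fintype.piFinset fun _ : Fin r => s) |>.filter (fun a => ∑ i, a i = n),
        ∏ i, w (a i) := by
  rw [← Fin.prod_const, prod_univ_sum]
  simp_rw [prod_mul_distrib, ← map_prod, prod_pow_eq_pow_sum, finsetSum_coeff,
    coeff_C_mul_X_pow, sum_filter]
  exact sum_congr rfl fun a _ => by simp only [eq_comm]

theorem coeff_pow_eq_zero_of_lt {p : R[X]} (hp : p.coeff 0 = 0) {n r : ℕ} (h : n < r) :
    (p ^ r).coeff n = 0 :=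
  X_pow_dvd_iff.mp (pow_dvd_pow_of_dvd (X_dvd_iff.mpr hp) r) n h

theorem coeff_mul_succ {p : R[X]} (hp : p.coeff 0 = 0) (q : R[X]) (n : ℕ) :
    (p * q).coeff (n + 1) = ∑ k ∈ range (n + 1), p.coeff (k + 1) * q.coeff (n - k) := by
  rw [coeff_mul, Nat.sum_antidiagonal_eq_sum_range_succ (fun i j => p.coeff i * q.coeff j),
    sum_range_succ']
  simp [hp]

end CommSemiring

variable {R : Type*} [CommRing R]

noncomputable def altPowCoeffSum (p : R[X]) (n : ℕ) : R :=
  ∑ r ∈ range (n + 1), (-1) ^ r * (p ^ r).coeff n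

variable {p : R[X]}

theorem altPowCoeffSum_zero : altPowCoeffSum p 0 = 1 := by
  simp [altPowCoeffSum]

theorem sum_range_eq_altPowCoeffSum (hp : p.coeff 0 = 0) {n N : ℕ} (h : n < N) :
    ∑ r ∈ range N, (-1) ^ r * (p ^ r).coeff n = altPowCoeffSum p n := by
  refine (sum_subset (range_subset_range.mpr h) fun r hrN hrn => ?_).symm
  rw [coeff_pow_eq_zero_of_lt hp (by simpa using hrn), mul_zero]

theorem altPowCoeffSum_succ (hp : p.coeff 0 = 0) (n : ℕ) :
    altPowCoeffSum p (n + 1) =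
      -∑ k ∈ range (n + 1), p.coeff (k + 1) * altPowCoeffSum p (n - k) := by
  rw [altPowCoeffSum, sum_range_succ']
  simp_rw [pow_succ', coeff_mul_succ hp, mul_sum]
  rw [sum_comm, ← sum_neg_distrib]
  simp only [pow_zero, one_mul, coeff_one, Nat.add_one_ne_zero, if_false, add_zero]
  refine sum_congr rfl fun k hk => ?_
  rw [← sum_range_eq_altPowCoeffSum hp (N := n + 1) (by omega), mul_sum, ← sum_neg_distrib]
  exact sum_congr rfl fun r _ => by ring

theorem neg_one_pow_mul_altPowCoeffSum_succ (hp : p.coeff 0 = 0) (n : ℕ) :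
    (-1) ^ (n + 1) * altPowCoeffSum p (n + 1) =
      ∑ k ∈ range (n + 1),
        (-1) ^ k * p.coeff (k + 1) * ((-1) ^ (n - k) * altPowCoeffSum p (n - k)) := by
  rw [altPowCoeffSum_succ hp, mul_neg, mul_sum, ← sum_neg_distrib]
  refine sum_congr rfl fun k hk => ?_
  have hsign : (-1 : R) ^ (n + 1) = -((-1) ^ k * (-1) ^ (n - k)) := by
    rw [← pow_add, Nat.add_sub_cancel' (by simpa [Nat.lt_succ_iff] using hk), pow_succ,
      mul_neg_one]
  rw [hsign]
  ring

end Polynomial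

def IsGoodWord {m n : ℕ} (f : Fin n → Fin m) : Prop :=
  (∀ k, 1 ≤ (f k : ℕ)) ∧
    ∀ (k : ℕ) (hk : k + 1 < n),
      (f ⟨k + 1, hk⟩ : ℕ) ≠ (f ⟨k, Nat.lt_of_succ_lt hk⟩ : ℕ) + 1

open scoped Classical in
noncomputable def goodWords (m n : ℕ) : Finset (Fin n → Fin m) := {f | IsGoodWord f}

theorem mem_goodWords {m n : ℕ} {f : Fin n → Fin m} : f ∈ goodWords m n ↔ IsGoodWord f := by
  simp [goodWords]

theorem phiNat_eq_card_goodWords (m n : ℕ) : phiNat m n = #(goodWords m n) := by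
  rw [← Nat.card_eq_finsetCard]
  exact Nat.card_congr (Equiv.subtypeEquivRight fun _ => mem_goodWords.symm)

theorem card_goodWords_zero (m : ℕ) : #(goodWords m 0) = 1 := by
  rw [card_eq_one]
  exact ⟨Fin.elim0, eq_singleton_iff_unique_mem.mpr
    ⟨mem_goodWords.mpr ⟨(·.elim0), fun _ h => absurd h (Nat.not_lt_zero _)⟩,
      fun _ _ => Subsingleton.elim _ _⟩⟩

theorem isGoodWord_cons {m n : ℕ} (y : Fin m) (t : Fin n → Fin m) :
    IsGoodWord (Fin.cons y t : Fin (n + 1) → Fin m) ↔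
      1 ≤ (y : ℕ) ∧ IsGoodWord t ∧ ∀ h : 0 < n, (t ⟨0, h⟩ : ℕ) ≠ y + 1 := by
  simp only [IsGoodWord, Fin.forall_fin_succ, Fin.cons_zero, Fin.cons_succ]
  constructor
  · rintro ⟨⟨hy, ht⟩, hadj⟩
    exact ⟨hy, ⟨ht, fun k hk => hadj (k + 1) (by omega)⟩,
      fun h => hadj 0 (Nat.succ_lt_succ h)⟩
  · rintro ⟨hy, ⟨ht, hadj⟩, hhead⟩
    refine ⟨⟨hy, ht⟩, fun k hk => ?_⟩
    cases k with
    | zero => exact hhead (by omega)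
    | succ k => exact hadj k (by omega)

theorem card_goodWords_head_eq (m n : ℕ) {y : ℕ} (hy : 1 ≤ y) (hym : y < m) :
    #{f ∈ goodWords m (n + 1) | (f 0 : ℕ) = y} =
      #{t ∈ goodWords m n | ∀ h : 0 < n, (t ⟨0, h⟩ : ℕ) ≠ y + 1} := by
  refine card_nbij' Fin.tail
    (fun t => (Fin.cons (⟨y, hym⟩ : Fin m) t : Fin (n + 1) → Fin m))
    (fun f hf => ?_) (fun t ht => ?_) (fun f hf => ?_) (fun t _ => Fin.tail_cons _ _)
  · simp only [coe_filter, Set.mem_ofPred_eq, mem_goodWords] at hf ⊢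
    obtain ⟨hgood, rfl⟩ := hf
    rw [← Fin.cons_self_tail f, isGoodWord_cons] at hgood
    exact hgood.2
  · simp only [coe_filter, Set.mem_ofPred_eq, mem_goodWords] at ht ⊢
    exact ⟨(isGoodWord_cons _ _).mpr ⟨hy, ht⟩, rfl⟩
  · simp only [coe_filter, Set.mem_ofPred_eq] at hf
    obtain ⟨-, rfl⟩ := hf
    exact Fin.cons_self_tail f

theorem card_goodWords_head_gt_eq_sum_tails (m n x : ℕ) :
    #{f ∈ goodWords m (n + 1) | x < (f 0 : ℕ)} =
      ∑ y ∈ Ioo x m,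
        #{t ∈ goodWords m n | ∀ h : 0 < n, (t ⟨0, h⟩ : ℕ) ≠ y + 1} := by
  rw [card_eq_sum_card_fiberwise (f := fun f => (f 0 : ℕ)) (t := Ioo x m)
    (s := {f ∈ goodWords m (n + 1) | x < (f 0 : ℕ)}) fun f hf => by
    simp only [coe_filter, Set.mem_ofPred_eq] at hf
    simp only [coe_Ioo, Set.mem_Ioo, hf.2, (f 0).isLt, and_self]]
  refine sum_congr rfl fun y hy => ?_
  rw [mem_Ioo] at hy
  rw [← card_goodWords_head_eq m n (by omega) hy.2, filter_filter]
  congr 1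
  exact filter_congr fun f _ => by omega

theorem card_goodWords_head_gt_succ_eq_sum_heads (m n x : ℕ) :
    #{f ∈ goodWords m (n + 1) | x + 1 < (f 0 : ℕ)} =
      ∑ y ∈ Ioo x m, #{t ∈ goodWords m (n + 1) | (t 0 : ℕ) = y + 1} := by
  rw [card_eq_sum_card_fiberwise (f := fun f => (f 0 : ℕ) - 1) (t := Ioo x m)
    (s := {f ∈ goodWords m (n + 1) | x + 1 < (f 0 : ℕ)}) fun f hf => by
    simp only [coe_filter, Set.mem_ofPred_eq] at hf
    simp only [coe_Ioo, Set.mem_Ioo]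
    omega]
  refine sum_congr rfl fun y hy => ?_
  rw [mem_Ioo] at hy
  rw [filter_filter]
  congr 1
  exact filter_congr fun f _ => by omega

theorem card_goodWords_head_gt_add (m n x : ℕ) :
    #{f ∈ goodWords m (n + 2) | x < (f 0 : ℕ)} +
        #{f ∈ goodWords m (n + 1) | x + 1 < (f 0 : ℕ)} =
      (m - (x + 1)) * #(goodWords m (n + 1)) := by
  rw [card_goodWords_head_gt_eq_sum_tails, card_goodWords_head_gt_succ_eq_sum_heads,
    ← sum_add_distrib]
  simp only [Nat.succ_pos, forall_true_left, Fin.zero_eta]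
  rw [sum_congr rfl fun y _ => (add_comm _ _).trans (card_filter_add_card_filter_not _),
    sum_const, Nat.card_Ioo, smul_eq_mul, Nat.sub_sub]

theorem card_goodWords_head_gt_eq_alternating_sum (m n x : ℕ) :
    (#{f ∈ goodWords m (n + 1) | x < (f 0 : ℕ)} : ℤ) =
      ∑ k ∈ range (n + 1),
        (-1) ^ k * ((m - (x + k + 1) : ℕ) : ℤ) * #(goodWords m (n - k)) := by
  induction n generalizing x with
  | zero =>
    simp [card_goodWords_head_gt_eq_sum_tails, card_goodWords_zero, Nat.sub_sub]
  | succ n ih =>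
    have hadd : (#{f ∈ goodWords m (n + 2) | x < (f 0 : ℕ)} : ℤ) +
        #{f ∈ goodWords m (n + 1) | x + 1 < (f 0 : ℕ)} =
          ((m - (x + 1) : ℕ) : ℤ) * #(goodWords m (n + 1)) := by
      exact_mod_cast card_goodWords_head_gt_add m n x
    rw [eq_sub_of_add_eq hadd, ih, sum_range_succ' _ (n + 1), sub_eq_add_neg, add_comm,
      ← sum_neg_distrib]
    congr 1
    · refine sum_congr rfl fun k _ => ?_
      rw [Nat.add_sub_add_right, show x + 1 + k + 1 = x + (k + 1) + 1 by ring, pow_succ]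
      ring
    · simp

theorem card_goodWords_succ (m n : ℕ) :
    (#(goodWords m (n + 1)) : ℤ) =
      ∑ k ∈ range (n + 1), (-1) ^ k * ((m - (k + 1) : ℕ) : ℤ) * #(goodWords m (n - k)) := by
  have hall : {f ∈ goodWords m (n + 1) | 0 < (f 0 : ℕ)} = goodWords m (n + 1) :=
    filter_true_of_mem fun f hf => (mem_goodWords.mp hf).1 0
  rw [← hall, card_goodWords_head_gt_eq_alternating_sum]
  simp only [zero_add]

theorem eq_of_sum_range_recurrence {R : Type*} [Semiring R] {u v : ℕ → R} (c : ℕ → R)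
    (h0 : u 0 = v 0) (hu : ∀ n, u (n + 1) = ∑ k ∈ range (n + 1), c k * u (n - k))
    (hv : ∀ n, v (n + 1) = ∑ k ∈ range (n + 1), c k * v (n - k)) : u = v := by
  funext n
  induction n using Nat.strong_induction_on with
  | _ n ih =>
    cases n with
    | zero => exact h0
    | succ n =>
      rw [hu, hv]
      exact sum_congr rfl fun k _ => by rw [ih (n - k) (by omega)]

noncomputable def runPoly (m : ℕ) : ℤ[X] :=
  ∑ a ∈ Icc 1 (m - 1), C ((m : ℤ) - a) * X ^ a

theorem coeff_runPoly (m k : ℕ) :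
    (runPoly m).coeff k = if k ∈ Icc 1 (m - 1) then (m : ℤ) - k else 0 := by
  simp only [runPoly, finsetSum_coeff, coeff_C_mul_X_pow, sum_ite_eq]

theorem coeff_runPoly_zero (m : ℕ) : (runPoly m).coeff 0 = 0 := by
  simp [coeff_runPoly]

theorem coeff_runPoly_succ (m k : ℕ) :
    (runPoly m).coeff (k + 1) = ((m - (k + 1) : ℕ) : ℤ) := by
  rw [coeff_runPoly]
  split_ifs with hk <;> rw [mem_Icc] at hk <;> omega

theorem stmt_5_general (m : ℕ) (n : ℕ) :
    phi m (n : ℤ) =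
      (-1 : ℤ) ^ n * ∑ r ∈ Finset.range (n + 1), (-1 : ℤ) ^ r *
        ∑ a ∈ (Fintype.piFinset fun _ : Fin r => Finset.Icc 1 (m - 1)) |>.filter
            (fun a => ∑ i, a i = n),
          ∏ i, ((m : ℤ) - (a i : ℤ)) := by
  have hrec :
      (fun n => (#(goodWords m n) : ℤ)) = fun n => (-1) ^ n * altPowCoeffSum (runPoly m) n :=
    eq_of_sum_range_recurrence (fun k => (-1) ^ k * ((m - (k + 1) : ℕ) : ℤ))
      (by simp [card_goodWords_zero, altPowCoeffSum_zero]) (card_goodWords_succ m) fun n => by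
        simpa only [coeff_runPoly_succ] using
          neg_one_pow_mul_altPowCoeffSum_succ (coeff_runPoly_zero m) n
  rw [phi, if_neg (by omega), Int.toNat_natCast, phiNat_eq_card_goodWords, congrFun hrec n,
    altPowCoeffSum]
  simp only [runPoly, coeff_pow_sum_C_mul_X_pow]

/-- **Proposition (Itagaki–Nakamoto–Torii).**
For `n ≥ 0`,
`φ(n) = (-1)ⁿ ∑_{r ≥ 0} (-1)^r ∑_{(a₁,…,a_r)} (m-a₁)⋯(m-a_r)`,
the inner sum being over `r`-tuples of integers `1 ≤ aᵢ ≤ m-1` with `a₁ + ⋯ + a_r = n`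
(only `r ≤ n` contributes). -/
theorem stmt_5 (m : ℕ) (hm : 2 ≤ m) (n : ℕ) :
    phi m (n : ℤ) =
      (-1 : ℤ) ^ n * ∑ r ∈ Finset.range (n + 1), (-1 : ℤ) ^ r *
        ∑ a ∈ (Fintype.piFinset fun _ : Fin r => Finset.Icc 1 (m - 1)) |>.filter
            (fun a => ∑ i, a i = n),
          ∏ i, ((m : ℤ) - (a i : ℤ)) :=
  stmt_5_general m n
end

section
/- Fix an integer m ≥ 2 and define φ(q; i_1≠1) for q ≥ 1 as the number of sequences (i_1, …, i_q) with each i_k ∈ {1, …, m-1}, with i_1 ≠ 1, and with i_{k+1} ≠ i_k + 1 for all 1 ≤ k ≤ q-1 (and φ(0; i_1≠1) = 1). Then for every integer q > 0, φ(q; i_1≠1) = Σ_{r=1}^{m-2} (-1)^{r-1} (m - 1 - r) φ(q - r), where φ(k) = 0 for k < 0. -/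
/-- `phiNe1 m q` counts the sequences as in `phiNat m q` which moreover start with an
entry different from `1` (with `phiNe1 m 0 = 1`). -/
noncomputable def phiNe1 (m q : ℕ) : ℕ :=
  Nat.card {f : Fin q → Fin m //
    (∀ k, 1 ≤ (f k : ℕ)) ∧
    (∀ h : 0 < q, (f ⟨0, h⟩ : ℕ) ≠ 1) ∧
    ∀ (k : ℕ) (hk : k + 1 < q),
      (f ⟨k + 1, hk⟩ : ℕ) ≠ (f ⟨k, Nat.lt_of_succ_lt hk⟩ : ℕ) + 1}

namespace PhiNe1

def IsAdmissible (m n : ℕ) (f : Fin n → Fin m) : Prop :=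
  (∀ k, 1 ≤ (f k : ℕ)) ∧
  ∀ (k : ℕ) (hk : k + 1 < n),
    (f ⟨k + 1, hk⟩ : ℕ) ≠ (f ⟨k, Nat.lt_of_succ_lt hk⟩ : ℕ) + 1

theorem isAdmissible_cons {m q : ℕ} (c : Fin m) (g : Fin q → Fin m) :
    IsAdmissible m (q + 1) (Fin.cons c g) ↔
      1 ≤ (c : ℕ) ∧ IsAdmissible m q g ∧ ∀ h : 0 < q, (g ⟨0, h⟩ : ℕ) ≠ c + 1 := by
  simp only [IsAdmissible, Fin.forall_fin_succ, Fin.cons_zero, Fin.cons_succ]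
  -- `Fin.cons c g ⟨k + 1, _⟩` reduces to `g ⟨k, _⟩`, so the index shifts are definitional.
  constructor
  · rintro ⟨⟨hc, hg⟩, hstep⟩
    exact ⟨hc, ⟨hg, fun k hk => hstep (k + 1) (by omega)⟩, fun _ => by exact hstep 0 (by omega)⟩
  · rintro ⟨hc, ⟨hg, hstep⟩, hhead⟩
    refine ⟨⟨hc, hg⟩, fun k hk => ?_⟩
    rcases k with _ | k
    exacts [hhead (by omega), hstep k (by omega)]

noncomputable def headCount (m c q : ℕ) : ℕ :=
  Nat.card {f : Fin q → Fin m // IsAdmissible m q f ∧ ∀ h : 0 < q, (f ⟨0, h⟩ : ℕ) = c}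

noncomputable def headAvoidCount (m c q : ℕ) : ℕ :=
  Nat.card {f : Fin q → Fin m // IsAdmissible m q f ∧ ∀ h : 0 < q, (f ⟨0, h⟩ : ℕ) ≠ c}

theorem phiNe1_eq_headAvoidCount (m q : ℕ) : phiNe1 m q = headAvoidCount m 1 q :=
  Nat.card_congr <| Equiv.subtypeEquivRight fun _ => by rw [IsAdmissible, and_right_comm, and_assoc]

theorem isAdmissible_fin_zero (m : ℕ) (f : Fin 0 → Fin m) : IsAdmissible m 0 f :=
  ⟨finZeroElim, fun _ h => absurd h (by omega)⟩

theorem card_subtype_fin_zero {α : Type*} {p : (Fin 0 → α) → Prop} (h : ∀ f, p f) :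
    Nat.card {f // p f} = 1 :=
  (Nat.card_congr (Equiv.subtypeUnivEquiv h)).trans (by simp)

theorem phiNat_zero (m : ℕ) : phiNat m 0 = 1 :=
  card_subtype_fin_zero (isAdmissible_fin_zero m)

theorem phi_natCast (m q : ℕ) : phi m q = phiNat m q := by
  simp [phi]

theorem phi_of_neg (m : ℕ) {n : ℤ} (hn : n < 0) : phi m n = 0 :=
  if_pos hn

theorem headAvoidCount_zero (m c : ℕ) : headAvoidCount m c 0 = 1 :=
  card_subtype_fin_zero fun f => ⟨isAdmissible_fin_zero m f, fun h => absurd h (by omega)⟩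

theorem headCount_eq_zero {m c q : ℕ} (hc : m ≤ c) (hq : 0 < q) : headCount m c q = 0 := by
  have : IsEmpty {f : Fin q → Fin m // IsAdmissible m q f ∧ ∀ h : 0 < q, (f ⟨0, h⟩ : ℕ) = c} :=
    ⟨fun f => by have := (f.1 ⟨0, hq⟩).isLt; have := f.2.2 hq; omega⟩
  exact Nat.card_of_isEmpty

theorem headCount_succ {m c q : ℕ} (hc : 1 ≤ c) (hcm : c < m) :
    headCount m c (q + 1) = headAvoidCount m (c + 1) q := by
  refine Nat.card_congr
    { toFun := fun f => ⟨Fin.tail f.1, ?_⟩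
      invFun := fun g => ⟨Fin.cons ⟨c, hcm⟩ g.1, (isAdmissible_cons _ _).2 ⟨hc, g.2⟩, fun _ => rfl⟩
      left_inv := fun f => Subtype.ext ?_
      right_inv := fun g => rfl }
  · obtain ⟨f, hf, hhead⟩ := f
    rw [← Fin.cons_self_tail f, isAdmissible_cons] at hf
    obtain ⟨-, htail, hnext⟩ := hf
    exact ⟨htail, fun h => hhead (Nat.succ_pos q) ▸ hnext h⟩
  · have hhead : f.1 0 = ⟨c, hcm⟩ := Fin.ext (f.2.2 (Nat.succ_pos q))
    change Fin.cons _ (Fin.tail f.1) = f.1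
    rw [← hhead, Fin.cons_self_tail]

theorem headCount_add_headAvoidCount (m c : ℕ) {q : ℕ} (hq : 0 < q) :
    headCount m c q + headAvoidCount m c q = phiNat m q := by
  classical
  simp only [headCount, headAvoidCount, forall_prop_of_true hq]
  rw [← Nat.card_sum]
  exact Nat.card_congr <| (Equiv.sumCongr (Equiv.subtypeSubtypeEquivSubtypeInter _ _).symm
    (Equiv.subtypeSubtypeEquivSubtypeInter _ _).symm).trans (Equiv.sumCompl _)

theorem phiNe1_eq_sum_headCount (m : ℕ) {q : ℕ} (hq : 0 < q) :
    phiNe1 m q = ∑ c ∈ Finset.Icc 2 (m - 1), headCount m c q := by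
  classical
  simp only [phiNe1_eq_headAvoidCount, headAvoidCount, headCount, forall_prop_of_true hq,
    Nat.card_eq_fintype_card, Fintype.card_subtype]
  rw [Finset.card_eq_sum_card_fiberwise (f := fun f : Fin q → Fin m => (f ⟨0, hq⟩ : ℕ))
    (t := Finset.Icc 2 (m - 1)) ?_]
  · refine Finset.sum_congr rfl fun c hc => ?_
    rw [Finset.filter_filter]
    congr 1
    ext f
    have := (Finset.mem_Icc.1 hc).1
    simp only [Finset.mem_filter, Finset.mem_univ, true_and]
    exact ⟨fun h => ⟨h.1.1, h.2⟩, fun h => ⟨⟨h.1, by omega⟩, h.2⟩⟩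
  · intro f hf
    simp only [Finset.coe_filter, Finset.mem_univ, true_and, Set.mem_ofPred_eq] at hf
    have := hf.1.1 ⟨0, hq⟩
    have := (f ⟨0, hq⟩).isLt
    simp only [Finset.coe_Icc, Set.mem_Icc]
    omega

theorem sum_Icc_alternating_succ {R : Type*} [CommRing R] (f : ℤ → R) (x : ℤ) (n : ℕ) :
    ∑ r ∈ Finset.Icc 1 (n + 1), (-1 : R) ^ (r - 1) * f (x + 1 - r) =
      f x - ∑ r ∈ Finset.Icc 1 n, (-1 : R) ^ (r - 1) * f (x - r) := by
  induction n with
  | zero => simp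
  | succ n ih =>
    rw [Finset.sum_Icc_succ_top (by omega), ih, Finset.sum_Icc_succ_top (by omega),
      show x + 1 - ((n + 1 + 1 : ℕ) : ℤ) = x - ((n + 1 : ℕ) : ℤ) by push_cast; ring,
      Nat.add_sub_cancel, Nat.add_sub_cancel, pow_succ]
    ring

theorem headCount_eq_sum (m : ℕ) {c q : ℕ} (hc : 1 ≤ c) (hq : 0 < q) :
    (headCount m c q : ℤ) = ∑ r ∈ Finset.Icc 1 (m - c), (-1) ^ (r - 1) * phi m (q - r) := by
  induction q using Nat.strong_induction_on generalizing c with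
  | _ q ih =>
  rcases le_or_gt m c with hmc | hcm
  · simp [headCount_eq_zero hmc hq, Nat.sub_eq_zero_of_le hmc]
  obtain ⟨p, rfl⟩ : ∃ p, q = p + 1 := ⟨q - 1, by omega⟩
  obtain ⟨n, hn⟩ : ∃ n, m - c = n + 1 := ⟨m - c - 1, by omega⟩
  rw [headCount_succ hc hcm, hn, Nat.cast_succ, sum_Icc_alternating_succ,
    show n = m - (c + 1) by omega]
  rcases p with _ | p
  · rw [headAvoidCount_zero, Finset.sum_eq_zero fun r hr => ?_]
    · simp [phi, phiNat_zero]
    · rw [phi_of_neg m (by have := (Finset.mem_Icc.1 hr).1; omega), mul_zero]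
  · rw [phi_natCast, ← headCount_add_headAvoidCount m (c + 1) (q := p + 1) (by omega),
      ← ih (p + 1) (by omega) (by omega) (by omega)]
    push_cast
    ring

end PhiNe1

theorem stmt_7_general (m : ℕ) (q : ℕ) (hq : 0 < q) :
    (phiNe1 m q : ℤ) = ∑ r ∈ Finset.Icc 1 (m - 2),
      (-1 : ℤ) ^ (r - 1) * ((m : ℤ) - 1 - (r : ℤ)) * phi m ((q : ℤ) - (r : ℤ)) := by
  rw [PhiNe1.phiNe1_eq_sum_headCount m hq]
  push_cast
  calc ∑ c ∈ Finset.Icc 2 (m - 1), (PhiNe1.headCount m c q : ℤ)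
      = ∑ c ∈ Finset.Icc 2 (m - 1), ∑ r ∈ Finset.Icc 1 (m - c),
          (-1) ^ (r - 1) * phi m (q - r) :=
        Finset.sum_congr rfl fun c hc =>
          PhiNe1.headCount_eq_sum m (by have := (Finset.mem_Icc.1 hc).1; omega) hq
    _ = ∑ r ∈ Finset.Icc 1 (m - 2), ∑ _c ∈ Finset.Icc 2 (m - r),
          (-1) ^ (r - 1) * phi m (q - r) :=
        Finset.sum_comm' fun c r => by simp only [Finset.mem_Icc]; omega
    _ = _ := Finset.sum_congr rfl fun r hr => by
        have hcard : ((m - r + 1 - 2 : ℕ) : ℤ) = m - 1 - r := by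
          simp only [Finset.mem_Icc] at hr; omega
        rw [Finset.sum_const, Nat.card_Icc, nsmul_eq_mul, hcard]
        ring

/-- **Lemma (Itagaki–Nakamoto–Torii).**
For every `q > 0`, `φ(q; i₁ ≠ 1) = ∑_{r=1}^{m-2} (-1)^{r-1} (m-1-r) φ(q - r)`. -/
theorem stmt_7 (m : ℕ) (hm : 2 ≤ m) (q : ℕ) (hq : 0 < q) :
    (phiNe1 m q : ℤ) = ∑ r ∈ Finset.Icc 1 (m - 2),
      (-1 : ℤ) ^ (r - 1) * ((m : ℤ) - 1 - (r : ℤ)) * phi m ((q : ℤ) - (r : ℤ)) :=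
  stmt_7_general m q hq
end

section
/- Let R be a commutative ring and m ≥ 3 an integer. Then the set {A ∈ M_m(R) | AB - BA ∈ N_m(R) for every B ∈ N_m(R)} is equal to B_m(R), the set of all upper triangular m × m matrices over R. -/
/-- Membership in `N_m(R)`: upper triangular with all diagonal entries equal. -/
def memN {R : Type*} [CommRing R] {m : ℕ} (X : Matrix (Fin m) (Fin m) R) : Prop :=
  (∀ i j, j < i → X i j = 0) ∧ ∀ i j, X i i = X j j

/-- Membership in `B_m(R)`: upper triangular. -/
def memB {R : Type*} [CommRing R] {m : ℕ} (X : Matrix (Fin m) (Fin m) R) : Prop :=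
  ∀ i j, j < i → X i j = 0

/-!
Upper triangular matrices are closed under products, and the diagonal of a product of two of
them is the product of the diagonals; so the commutator of an upper triangular `A` with any
`B ∈ N_m(R)` is upper triangular with zero diagonal. Conversely, if `A i j ≠ 0` with `j < i`,
the commutator of `A` with the matrix unit `E_{j i} ∈ N_m(R)` has diagonal entry `-A i j` at `j`
but `0` at any third index `r`, which exists as soon as `m ≥ 3`.
-/

namespace Matrix

variable {n R : Type*} [LinearOrder n] [Fintype n]

theorem IsUpperTriangular.mul_apply_self [NonUnitalNonAssocSemiring R] {M N : Matrix n n R}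
    (hM : M.IsUpperTriangular) (hN : N.IsUpperTriangular) (i : n) :
    (M * N) i i = M i i * N i i := by
  rw [mul_apply]
  refine Finset.sum_eq_single i (fun k _ hki => ?_) (by simp)
  rcases hki.lt_or_gt with hki | hik
  · rw [hM hki, zero_mul]
  · rw [hN hik, mul_zero]

theorem IsUpperTriangular.commutator_apply_self [NonUnitalCommRing R] {M N : Matrix n n R}
    (hM : M.IsUpperTriangular) (hN : N.IsUpperTriangular) (i : n) :
    (M * N - N * M) i i = 0 := by
  rw [sub_apply, hM.mul_apply_self hN, hN.mul_apply_self hM, mul_comm, sub_self]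

end Matrix

section

open Matrix

variable {R : Type*} [CommRing R] {m : ℕ}

theorem memB_iff_isUpperTriangular {A : Matrix (Fin m) (Fin m) R} :
    memB A ↔ A.IsUpperTriangular :=
  ⟨fun h i j => h i j, fun h i j => @h i j⟩

theorem memN_iff {X : Matrix (Fin m) (Fin m) R} :
    memN X ↔ X.IsUpperTriangular ∧ ∀ i j, X i i = X j j := by
  rw [memN, ← memB, memB_iff_isUpperTriangular]

theorem memN_commutator_of_memB {A B : Matrix (Fin m) (Fin m) R} (hA : memB A) (hB : memN B) :
    memN (A * B - B * A) := by
  rw [memB_iff_isUpperTriangular] at hA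
  rw [memN_iff] at hB ⊢
  refine ⟨(hA.mul hB.1).sub (hB.1.mul hA), fun i j => ?_⟩
  rw [hA.commutator_apply_self hB.1, hA.commutator_apply_self hB.1]

theorem memN_single_of_lt {i j : Fin m} (hij : i < j) (c : R) : memN (single i j c) := by
  refine memN_iff.2 ⟨blockTriangular_single hij.le c, fun k l => ?_⟩
  have hne : ∀ k, ¬(i = k ∧ j = k) := fun k h => hij.ne (h.1.trans h.2.symm)
  rw [single_apply_of_ne _ _ _ _ _ (hne k), single_apply_of_ne _ _ _ _ _ (hne l)]

theorem memB_of_forall_memN_commutator (hm : 3 ≤ m) {A : Matrix (Fin m) (Fin m) R}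
    (hA : ∀ B, memN B → memN (A * B - B * A)) : memB A := by
  intro i j hji
  obtain ⟨r, hrj, hri⟩ := Fin.exists_ne_and_ne_of_two_lt j i hm
  have hdiag := (hA _ (memN_single_of_lt hji 1)).2 j r
  have hjj : (A * single j i 1 - single j i 1 * A : Matrix (Fin m) (Fin m) R) j j = -A i j := by
    rw [Matrix.sub_apply, mul_single_apply_of_ne _ _ _ _ _ hji.ne, single_mul_apply_same, one_mul,
      zero_sub]
  have hrr : (A * single j i 1 - single j i 1 * A : Matrix (Fin m) (Fin m) R) r r = 0 := by
    rw [Matrix.sub_apply, mul_single_apply_of_ne _ _ _ _ _ hri,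
      single_mul_apply_of_ne _ _ _ _ _ hrj, sub_zero]
  rwa [hjj, hrr, neg_eq_zero] at hdiag

end

/-- **Proposition (Itagaki–Nakamoto–Torii).**
For `m ≥ 3`, `{A ∈ M_m(R) | [A, B] ∈ N_m(R) for all B ∈ N_m(R)} = B_m(R)`. -/
theorem stmt_16 (R : Type*) [CommRing R] (m : ℕ) (hm : 3 ≤ m) :
    {A : Matrix (Fin m) (Fin m) R | ∀ B, memN B → memN (A * B - B * A)} =
      {A : Matrix (Fin m) (Fin m) R | memB A} :=
  Set.ext fun _ =>
    ⟨memB_of_forall_memN_commutator hm, fun hA _ hB => memN_commutator_of_memB hA hB⟩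
end

section
/- Let C_• be a chain complex of finitely generated free ℤ-modules (indexed by ℤ). If for every field k the complex C_• ⊗_ℤ k obtained by tensoring with k is acyclic (i.e. has vanishing homology in every degree), then C_• itself is acyclic (all homology groups H_i(C_•) vanish). -/
open TensorProduct

private lemma lz {M N : Type*} [AddCommGroup M] [AddCommGroup N] (f : M → N)
    (hf : ∀ a b, f (a + b) = f a + f b) (n : ℤ) (x : M) : f (n • x) = n • f x :=
  map_zsmul (AddMonoidHom.mk' f hf) n x

private lemma intModule_eq {M : Type*} [AddCommGroup M] (h1 h2 : Module ℤ M) : h1 = h2 :=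
  @Subsingleton.elim _ (@Unique.instSubsingleton _ AddCommGroup.uniqueIntModule) h1 h2

private lemma zsmul_tmul_left {M N : Type*} [AddCommGroup M] [Module ℤ M] [AddCommGroup N]
    [Module ℤ N] (n : ℤ) (x : M) (y : N) :
    n • (x ⊗ₜ[ℤ] y) = (n • x) ⊗ₜ[ℤ] y :=
  (lz (· ⊗ₜ[ℤ] y) (fun a b => TensorProduct.add_tmul a b y) n x).symm

private lemma zsmul_tmul_right {M N : Type*} [AddCommGroup M] [Module ℤ M] [AddCommGroup N]
    [Module ℤ N] (n : ℤ) (x : M) (y : N) :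
    n • (x ⊗ₜ[ℤ] y) = x ⊗ₜ[ℤ] (n • y) :=
  (lz (x ⊗ₜ[ℤ] ·) (fun a b => TensorProduct.tmul_add x a b) n y).symm

private lemma rat_denom {N : Type*} [AddCommGroup N] [Module ℤ N] (t : ℚ ⊗[ℤ] N) :
    ∃ (n : ℤ) (z : N), n ≠ 0 ∧ n • t = (1:ℚ) ⊗ₜ[ℤ] z := by
  induction t using TensorProduct.induction_on with
  | zero => exact ⟨1, 0, one_ne_zero, by simp⟩
  | tmul q m =>
      refine ⟨(q.den : ℤ), q.num • m, Int.natCast_ne_zero.mpr q.den_nz, ?_⟩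
      have h1 : (q.den:ℤ) • q = (q.num : ℚ) := by
        rw [zsmul_eq_mul]
        push_cast
        rw [mul_comm, Rat.mul_den_eq_num]
      calc (q.den:ℤ) • (q ⊗ₜ[ℤ] m) = ((q.den:ℤ) • q) ⊗ₜ[ℤ] m := zsmul_tmul_left _ _ _
        _ = ((q.num:ℚ)) ⊗ₜ[ℤ] m := by rw [h1]
        _ = (q.num • (1:ℚ)) ⊗ₜ[ℤ] m := by rw [zsmul_one]
        _ = q.num • ((1:ℚ) ⊗ₜ[ℤ] m) := (zsmul_tmul_left _ _ _).symm
        _ = (1:ℚ) ⊗ₜ[ℤ] (q.num • m) := zsmul_tmul_right _ _ _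
  | add t1 t2 ih1 ih2 =>
      obtain ⟨n1, z1, hn1, h1⟩ := ih1
      obtain ⟨n2, z2, hn2, h2⟩ := ih2
      refine ⟨n1 * n2, n2 • z1 + n1 • z2, mul_ne_zero hn1 hn2, ?_⟩
      have e1 : (n1 * n2) • t1 = (1:ℚ) ⊗ₜ[ℤ] (n2 • z1) := by
        rw [mul_comm, mul_zsmul, h1, zsmul_tmul_right]
      have e2 : (n1 * n2) • t2 = (1:ℚ) ⊗ₜ[ℤ] (n1 • z2) := by
        rw [mul_zsmul, h2, zsmul_tmul_right]
      rw [smul_add, e1, e2, TensorProduct.tmul_add]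

private lemma zmod_surj (p : ℕ) {N : Type*} [AddCommGroup N] [Module ℤ N]
    (t : ZMod p ⊗[ℤ] N) : ∃ z : N, t = (1 : ZMod p) ⊗ₜ[ℤ] z := by
  induction t using TensorProduct.induction_on with
  | zero => exact ⟨0, by simp⟩
  | tmul c m =>
      obtain ⟨a, rfl⟩ := ZMod.intCast_surjective c
      refine ⟨a • m, ?_⟩
      calc ((a:ℤ) : ZMod p) ⊗ₜ[ℤ] m = (a • (1:ZMod p)) ⊗ₜ[ℤ] m := by rw [zsmul_one]
        _ = a • ((1:ZMod p) ⊗ₜ[ℤ] m) := (zsmul_tmul_left _ _ _).symm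
        _ = (1:ZMod p) ⊗ₜ[ℤ] (a • m) := zsmul_tmul_right _ _ _
  | add t1 t2 ih1 ih2 =>
      obtain ⟨z1, h1⟩ := ih1
      obtain ⟨z2, h2⟩ := ih2
      exact ⟨z1 + z2, by rw [h1, h2, TensorProduct.tmul_add]⟩

private lemma tmul_eq_zero_rat {M : Type*} [AddCommGroup M] [Module ℤ M] [Module.Free ℤ M]
    {m : M} (h : (1:ℚ) ⊗ₜ[ℤ] m = 0) : m = 0 := by
  let b := Module.Free.chooseBasis ℤ M
  have h2 : ∀ j, b.repr m j = 0 := by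
    intro j
    have h1 : (b.repr m j) • (1 : ℚ) = 0 := by
      simpa using congrArg (fun t => (b.baseChange ℚ).repr t j) h
    rw [zsmul_one] at h1
    exact_mod_cast h1
  have h3 : b.repr m = 0 := Finsupp.ext h2
  simpa [h3] using (b.repr.symm_apply_apply m).symm

private lemma zsmul_eq_zero_free {M : Type*} [AddCommGroup M] [Module ℤ M] [Module.Free ℤ M]
    {n : ℤ} (hn : n ≠ 0) {x : M} (h : n • x = 0) : x = 0 := by
  let b := Module.Free.chooseBasis ℤ M
  have hrepr : b.repr (n • x) = n • b.repr x := map_zsmul b.repr.toAddEquiv n x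
  have h1 : n • b.repr x = 0 := by rw [← hrepr, h, map_zero]
  have h2 : ∀ j, b.repr x j = 0 := by
    intro j
    have h3 : (n • b.repr x) j = n • (b.repr x j) :=
      map_zsmul (Finsupp.applyAddHom (M := ℤ) j) n (b.repr x)
    rw [h1] at h3
    have h4 : n • b.repr x j = 0 := h3.symm.trans rfl
    rw [zsmul_eq_mul, Int.cast_id] at h4
    exact (mul_eq_zero.mp h4).resolve_left hn
  have h5 : b.repr x = 0 := Finsupp.ext h2
  simpa [h5] using (b.repr.symm_apply_apply x).symm

private lemma tmul_eq_zero_zmod (p : ℕ) [NeZero p] {M : Type*} [AddCommGroup M] [Module ℤ M]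
    [Module.Free ℤ M] {m : M} (h : (1 : ZMod p) ⊗ₜ[ℤ] m = 0) : ∃ w : M, m = (p:ℤ) • w := by
  let b := Module.Free.chooseBasis ℤ M
  have h2 : ∀ j, (p:ℤ) ∣ b.repr m j := by
    intro j
    have h1 : (b.repr m j) • (1 : ZMod p) = 0 := by
      simpa using congrArg (fun t => (b.baseChange (ZMod p)).repr t j) h
    rwa [zsmul_one, ZMod.intCast_zmod_eq_zero_iff_dvd] at h1
  set f := (b.repr m).mapRange (fun a => a / (p:ℤ)) (by simp) with hf
  refine ⟨b.repr.symm f, ?_⟩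
  apply b.repr.injective
  have hrepr : b.repr ((p:ℤ) • b.repr.symm f) = (p:ℤ) • b.repr (b.repr.symm f) :=
    map_zsmul b.repr.toAddEquiv (p:ℤ) (b.repr.symm f)
  rw [hrepr, b.repr.apply_symm_apply]
  ext j
  have hj : ((p:ℤ) • f) j = (p:ℤ) • f j := map_zsmul (Finsupp.applyAddHom (M := ℤ) j) (p:ℤ) f
  rw [hj, hf, Finsupp.mapRange_apply, zsmul_eq_mul, Int.cast_id]
  exact (Int.mul_ediv_cancel' (h2 j)).symm

/-- **Lemma (Itagaki–Nakamoto–Torii).**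
Let `C` be a chain complex of finitely generated free `ℤ`-modules, indexed by `ℤ`, with
differentials `d i : C (i+1) → C i` satisfying `d i ∘ d (i+1) = 0`.  If for every field `k`
the base-changed complex `C ⊗ℤ k` is acyclic (exact at every position), then `C` itself is
acyclic (exact at every position, i.e. all homology groups vanish). -/
theorem stmt_17 (C : ℤ → Type) [∀ i, AddCommGroup (C i)] [∀ i, Module ℤ (C i)]
    [∀ i, Module.Free ℤ (C i)] [∀ i, Module.Finite ℤ (C i)]
    (d : ∀ i : ℤ, C (i + 1) →ₗ[ℤ] C i)
    (hdd : ∀ i : ℤ, (d i).comp (d (i + 1)) = 0)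
    (hexact : ∀ (k : Type) [Field k], ∀ i : ℤ,
      Function.Exact (LinearMap.baseChange k (d (i + 1))) (LinearMap.baseChange k (d i)))
    (i : ℤ) :
    Function.Exact (d (i + 1)) (d i) := by
  classical
  rw [LinearMap.exact_iff]
  set K := LinearMap.ker (d i) with hKdef
  set B := LinearMap.range (d (i+1)) with hBdef
  have hdd0 : ∀ z : C (i+1+1), d i (d (i+1) z) = 0 := by
    intro z
    simpa using DFunLike.congr_fun (hdd i) z
  have hBK : B ≤ K := by
    rintro _ ⟨z, rfl⟩
    simpa [hKdef, LinearMap.mem_ker] using hdd0 z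
  -- Step A : every cycle is a boundary after multiplication by a nonzero integer
  have stepA : ∀ x : K, ∃ n : ℤ, n ≠ 0 ∧ n • (x : C (i+1)) ∈ B := by
    intro x
    have hx0 : LinearMap.baseChange ℚ (d i) ((1:ℚ) ⊗ₜ[ℤ] (x : C (i+1))) = 0 := by
      rw [LinearMap.baseChange_tmul, show d i (x : C (i+1)) = 0 from x.2, TensorProduct.tmul_zero]
    obtain ⟨t, ht⟩ := (hexact ℚ i ((1:ℚ) ⊗ₜ[ℤ] (x : C (i+1)))).mp hx0
    obtain ⟨n, z, hn, hnt⟩ := rat_denom t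
    refine ⟨n, hn, ⟨z, ?_⟩⟩
    have key : (1:ℚ) ⊗ₜ[ℤ] (d (i+1) z) = (1:ℚ) ⊗ₜ[ℤ] (n • (x : C (i+1))) := by
      calc (1:ℚ) ⊗ₜ[ℤ] (d (i+1) z)
          = LinearMap.baseChange ℚ (d (i+1)) ((1:ℚ) ⊗ₜ[ℤ] z) := by
            rw [LinearMap.baseChange_tmul]
        _ = LinearMap.baseChange ℚ (d (i+1)) (n • t) := by rw [hnt]
        _ = n • LinearMap.baseChange ℚ (d (i+1)) t :=
            lz _ (LinearMap.baseChange ℚ (d (i+1))).map_add n t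
        _ = n • ((1:ℚ) ⊗ₜ[ℤ] (x : C (i+1))) := by rw [ht]
        _ = (1:ℚ) ⊗ₜ[ℤ] (n • (x : C (i+1))) := zsmul_tmul_right _ _ _
    have h0 : (1:ℚ) ⊗ₜ[ℤ] (d (i+1) z - n • (x : C (i+1))) = 0 := by
      rw [TensorProduct.tmul_sub, key, sub_self]
    exact sub_eq_zero.mp (tmul_eq_zero_rat h0)
  -- Step B : cycles are divisible by every prime, modulo boundaries
  have stepB : ∀ p : ℕ, p.Prime → ∀ x : K, ∃ (y : K) (b : C (i+1)), b ∈ B ∧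
      (x : C (i+1)) = (p:ℤ) • (y : C (i+1)) + b := by
    intro p hp x
    haveI : Fact p.Prime := ⟨hp⟩
    have hx0 : LinearMap.baseChange (ZMod p) (d i) ((1 : ZMod p) ⊗ₜ[ℤ] (x : C (i+1))) = 0 := by
      rw [LinearMap.baseChange_tmul, show d i (x : C (i+1)) = 0 from x.2, TensorProduct.tmul_zero]
    obtain ⟨t, ht⟩ := (hexact (ZMod p) i ((1 : ZMod p) ⊗ₜ[ℤ] (x : C (i+1)))).mp hx0
    obtain ⟨z, rfl⟩ := zmod_surj p t
    rw [LinearMap.baseChange_tmul] at ht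
    have h0 : (1 : ZMod p) ⊗ₜ[ℤ] ((x : C (i+1)) - d (i+1) z) = 0 := by
      rw [TensorProduct.tmul_sub, ht, sub_self]
    obtain ⟨w, hw⟩ := tmul_eq_zero_zmod p h0
    have hpne : (p:ℤ) ≠ 0 := Int.natCast_ne_zero.mpr hp.ne_zero
    have hwK : w ∈ K := by
      have hdw : (p:ℤ) • d i w = 0 := by
        rw [← lz (d i) (d i).map_add (p:ℤ) w, ← hw, map_sub,
          show d i (x : C (i+1)) = 0 from x.2, hdd0 z, sub_zero]
      exact zsmul_eq_zero_free hpne hdw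
    exact ⟨⟨w, hwK⟩, d (i+1) z, ⟨z, rfl⟩, sub_eq_iff_eq_add.mp hw⟩
  -- the homology group `H = K ⧸ B''`
  haveI : IsNoetherian ℤ (C (i+1)) := isNoetherian_of_isNoetherianRing_of_finite ℤ (C (i+1))
  have hKfin := Module.Finite.iff_fg.mpr (IsNoetherian.noetherian K)
  haveI hKfgA : AddGroup.FG ↥K := by
    have e : AddCommGroup.toIntModule ↥K = K.module := intModule_eq _ _
    refine Module.Finite.iff_addGroup_fg.mp ?_
    rw [e]
    exact hKfin
  set ι : ↥K →+ C (i+1) := AddMonoidHom.mk' (fun x : ↥K => (x : C (i+1))) (fun a b => rfl)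
    with hι
  set B'' : AddSubgroup ↥K := AddSubgroup.comap ι B.toAddSubgroup
    with hB''
  haveI : AddGroup.FG (↥K ⧸ B'') :=
    AddGroup.fg_of_surjective (QuotientAddGroup.mk'_surjective B'')
  have htor : AddMonoid.IsTorsion (↥K ⧸ B'') := by
    intro h
    obtain ⟨x, rfl⟩ := QuotientAddGroup.mk'_surjective B'' h
    obtain ⟨n, hn, hnx⟩ := stepA x
    have hmem : n • x ∈ B'' := by
      rw [hB'', AddSubgroup.mem_comap]
      have h2 : ι (n • x) = n • ι x := map_zsmul ι n x
      rw [h2]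
      exact (Submodule.mem_toAddSubgroup B).mpr hnx
    have h1 : n • QuotientAddGroup.mk' B'' x = 0 := by
      rw [← map_zsmul (QuotientAddGroup.mk' B'') n x]
      exact (QuotientAddGroup.eq_zero_iff _).mpr hmem
    rw [isOfFinAddOrder_iff_nsmul_eq_zero]
    refine ⟨n.natAbs, Int.natAbs_pos.mpr hn, ?_⟩
    rw [← natCast_zsmul]
    rcases Int.natAbs_eq n with he | he
    · rw [← he, h1]
    · rw [show ((n.natAbs : ℤ)) = -n by omega, neg_zsmul, h1, neg_zero]
  haveI hHfin : Finite (↥K ⧸ B'') := AddCommGroup.finite_of_fg_torsion _ htor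
  -- multiplication by any prime is surjective on the homology
  have hsurj : ∀ p : ℕ, p.Prime → ∀ h : ↥K ⧸ B'', ∃ y : ↥K ⧸ B'', (p:ℤ) • y = h := by
    intro p hp h
    obtain ⟨x, rfl⟩ := QuotientAddGroup.mk'_surjective B'' h
    obtain ⟨y, b, hb, hxy⟩ := stepB p hp x
    refine ⟨QuotientAddGroup.mk' B'' y, ?_⟩
    rw [← map_zsmul (QuotientAddGroup.mk' B'') (p:ℤ) y]
    have hmem : (p:ℤ) • y - x ∈ B'' := by
      rw [hB'', AddSubgroup.mem_comap]
      have h2 : ι ((p:ℤ) • y - x) = (p:ℤ) • (y : C (i+1)) - (x : C (i+1)) := by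
        rw [map_sub, map_zsmul ι (p:ℤ) y]
        rfl
      rw [h2, hxy]
      have h3 : (p:ℤ) • (y : C (i+1)) - ((p:ℤ) • (y : C (i+1)) + b) = -b := by abel
      rw [h3]
      exact (Submodule.mem_toAddSubgroup B).mpr (neg_mem hb)
    exact QuotientAddGroup.eq_iff_sub_mem.mpr hmem
  -- hence multiplication by any positive integer is surjective
  have hall : ∀ m : ℕ, 0 < m → ∀ h : ↥K ⧸ B'', ∃ y : ↥K ⧸ B'', (m:ℤ) • y = h := by
    intro m
    induction m using Nat.strong_induction_on with
    | _ m ih =>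
      intro hm h
      rcases eq_or_ne m 1 with rfl | hm1
      · exact ⟨h, by simp⟩
      · have hp := Nat.minFac_prime hm1
        have hdvd := Nat.minFac_dvd m
        obtain ⟨z, hz⟩ := hsurj m.minFac hp h
        have hqpos : 0 < m / m.minFac := Nat.div_pos (Nat.minFac_le hm) hp.pos
        have hqlt : m / m.minFac < m := Nat.div_lt_self hm hp.one_lt
        obtain ⟨y, hy⟩ := ih (m / m.minFac) hqlt hqpos z
        refine ⟨y, ?_⟩
        have hmul : m.minFac * (m / m.minFac) = m := Nat.mul_div_cancel' hdvd
        calc (m:ℤ) • y = ((m.minFac * (m / m.minFac) : ℕ) : ℤ) • y := by rw [hmul]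
          _ = ((m.minFac : ℤ) * ((m / m.minFac : ℕ) : ℤ)) • y := by push_cast; ring_nf
          _ = (m.minFac : ℤ) • (((m / m.minFac : ℕ) : ℤ) • y) := mul_zsmul y _ _
          _ = (m.minFac : ℤ) • z := by rw [hy]
          _ = h := hz
  -- the homology group vanishes
  have hHzero : ∀ h : ↥K ⧸ B'', h = 0 := by
    intro h
    have hpos : 0 < Nat.card (↥K ⧸ B'') := Nat.card_pos
    obtain ⟨y, hy⟩ := hall (Nat.card (↥K ⧸ B'')) hpos h
    rw [← hy, natCast_zsmul, card_nsmul_eq_zero']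
  -- conclude
  apply le_antisymm _ hBK
  intro x hx
  have h1 : QuotientAddGroup.mk' B'' (⟨x, hx⟩ : K) = 0 := hHzero _
  have h2 : (⟨x, hx⟩ : ↥K) ∈ B'' := (QuotientAddGroup.eq_zero_iff _).mp h1
  rw [hB'', AddSubgroup.mem_comap] at h2
  exact (Submodule.mem_toAddSubgroup B).mp h2
end
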